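/- arXiv:2112.13173 — 4 statements merged into one kernel-verified Lean document; each statement's English description precedes it below -/
import Mathlib

section
/- (Theorem 3.1, block form) If P L Pᵀ = [[L₁₁, L₁₂], [0, 0]], then X P H Pᵀ X⁻¹ = [[H⁽¹⁾, H⁽²⁾], [0, 0]], where H⁽¹⁾ ∈ ℝ^{(k+1)×(k+1)} is given in block form by H⁽¹⁾ = [[ξ (L₁₁ L₁₁ᵀ + L₁₂ L₁₂ᵀ) + ((1−ξ)/n) e eᵀ, ((1−ξ)(n−k)/n) e], [((1−ξ)/n) eᵀ, (1−ξ)(n−k)/n]] with e the all-ones vector of length k, and H⁽²⁾ ∈ ℝ^{(k+1)×(m−1)} is given by H⁽²⁾ = [[((1−ξ)/n) e eᵀ], [((1−ξ)/n) eᵀ]] with e the all-ones vector of length k (resp. length m−1 for eᵀ), and the bottom (m−1) rows of X P H Pᵀ X⁻¹ are zero. -/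
/-!
Conjugation by the permutation matrix `P` is orthogonal and fixes the all-ones matrix `eeᵀ`, so
`P H Pᵀ = ξ diag(L₁₁L₁₁ᵀ + L₁₂L₁₂ᵀ, 0) + ((1−ξ)/n) eeᵀ`. The similarity `X = diag(I, Y)` fixes
the first summand and sends `eeᵀ` to the rank-one matrix `(Xe)(eᵀX⁻¹)`. Because `e₁ᵀê = 0` we have
`Y⁻¹ = I + ê e₁ᵀ`, hence `Xe` is the indicator of the first `k + 1` coordinates and
`eᵀX⁻¹ = (eᵀ, m, eᵀ)`: the last `m − 1` rows vanish and the first dangling column carries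
weight `m = n − k`.
-/

open Matrix

namespace Matrix

lemma of_const_one_eq_vecMulVec {m n R : Type*} [MulOneClass R] :
    (of fun _ _ => 1 : Matrix m n R) = vecMulVec 1 1 := by
  ext; simp [vecMulVec_apply]

variable {n R : Type*} [Fintype n] [DecidableEq n]

lemma permMatrix_transpose_mul_self [NonAssocSemiring R] (σ : Equiv.Perm n) :
    (σ.permMatrix R)ᵀ * σ.permMatrix R = 1 := by
  rw [transpose_permMatrix, ← permMatrix_mul, mul_inv_cancel, permMatrix_one]

lemma permMatrix_mul_ones_mul_transpose [CommRing R] (σ : Equiv.Perm n) :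
    σ.permMatrix R * of (fun _ _ => 1) * (σ.permMatrix R)ᵀ = of fun _ _ => 1 := by
  rw [of_const_one_eq_vecMulVec, mul_vecMulVec, vecMulVec_mul, transpose_permMatrix,
    permMatrix_mulVec, vecMul_permMatrix]
  rfl

lemma conj_mul_transpose_self [CommSemiring R] {P : Matrix n n R} (hP : Pᵀ * P = 1)
    (L : Matrix n n R) : P * (L * Lᵀ) * Pᵀ = (P * L * Pᵀ) * (P * L * Pᵀ)ᵀ := by
  simp only [transpose_mul, transpose_transpose, Matrix.mul_assoc]
  rw [← Matrix.mul_assoc Pᵀ P, hP, Matrix.one_mul]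

lemma one_sub_vecMulVec_mul_one_add [CommRing R] {u v : n → R} (h : v ⬝ᵥ u = 0) :
    (1 - vecMulVec u v) * (1 + vecMulVec u v) = 1 := by
  rw [sub_mul, Matrix.mul_add, Matrix.mul_add, vecMulVec_mul_vecMulVec, h]
  simp

lemma fromBlocks_zero_mul_transpose {m k : Type*} [Fintype m] [Fintype k] [CommSemiring R]
    (A : Matrix k k R) (B : Matrix k m R) :
    fromBlocks A B 0 0 * (fromBlocks A B 0 0)ᵀ =
      fromBlocks (A * Aᵀ + B * Bᵀ) 0 0 (0 : Matrix m m R) := by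
  simp [fromBlocks_transpose, fromBlocks_multiply]

def lumpingMatrix (R k β : Type*) [DecidableEq k] [DecidableEq β] [CommRing R] :
    Matrix (k ⊕ (Fin 1 ⊕ β)) (k ⊕ (Fin 1 ⊕ β)) R :=
  fromBlocks 1 0 0 (1 - vecMulVec (Sum.elim 0 1) (Sum.elim 1 0))

variable {k β : Type*} [Fintype k] [Fintype β] [DecidableEq k] [DecidableEq β] [CommRing R]

lemma lumpingMatrix_inv : (lumpingMatrix R k β)⁻¹ =
    fromBlocks 1 0 0 (1 + vecMulVec (Sum.elim 0 1) (Sum.elim 1 0)) := by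
  refine inv_eq_right_inv ?_
  rw [lumpingMatrix, fromBlocks_multiply, one_sub_vecMulVec_mul_one_add (by simp)]
  simp

lemma lumpingMatrix_mulVec_one :
    lumpingMatrix R k β *ᵥ 1 = (Sum.elim 1 (Sum.elim 1 0) : k ⊕ (Fin 1 ⊕ β) → R) := by
  ext (i | i | i) <;>
    simp [lumpingMatrix, fromBlocks_mulVec, sub_mulVec, vecMulVec_mulVec, dotProduct_one]

lemma one_vecMul_lumpingMatrix_inv : 1 ᵥ* (lumpingMatrix R k β)⁻¹ =
    (Sum.elim 1 (Sum.elim (fun _ => 1 + Fintype.card β) 1) : k ⊕ (Fin 1 ⊕ β) → R) := by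
  ext (i | i | i) <;>
    simp [lumpingMatrix_inv, vecMul_fromBlocks, vecMul_add, vecMul_vecMulVec, one_dotProduct]

lemma lumpingMatrix_conj_fromBlocks_zero (A : Matrix k k R) :
    lumpingMatrix R k β * fromBlocks A 0 0 0 * (lumpingMatrix R k β)⁻¹ = fromBlocks A 0 0 0 := by
  rw [lumpingMatrix_inv, lumpingMatrix]
  simp [fromBlocks_multiply]

lemma lumpingMatrix_conj_ones :
    lumpingMatrix R k β * of (fun _ _ => 1) * (lumpingMatrix R k β)⁻¹ =
      vecMulVec (Sum.elim 1 (Sum.elim 1 0) : k ⊕ (Fin 1 ⊕ β) → R)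
        (Sum.elim 1 (Sum.elim (fun _ => 1 + Fintype.card β) 1)) := by
  rw [of_const_one_eq_vecMulVec, mul_vecMulVec, vecMulVec_mul, lumpingMatrix_mulVec_one,
    one_vecMul_lumpingMatrix_inv]

end Matrix

theorem lumping_theorem_block_form_general (k r : ℕ)
    (ξ : ℝ)
    (L P : Matrix (Fin k ⊕ (Fin 1 ⊕ Fin r)) (Fin k ⊕ (Fin 1 ⊕ Fin r)) ℝ)
    (hP : ∃ σ : Equiv.Perm (Fin k ⊕ (Fin 1 ⊕ Fin r)), P = σ.permMatrix ℝ)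
    (L11 : Matrix (Fin k) (Fin k) ℝ) (L12 : Matrix (Fin k) (Fin 1 ⊕ Fin r) ℝ)
    (hL : P * L * Pᵀ = Matrix.fromBlocks L11 L12 0 0) :
    let n : ℝ := (k : ℝ) + (1 + r)
    let c : ℝ := (1 - ξ) / n
    let H : Matrix (Fin k ⊕ (Fin 1 ⊕ Fin r)) (Fin k ⊕ (Fin 1 ⊕ Fin r)) ℝ :=
      ξ • (L * Lᵀ) + c • Matrix.of (fun _ _ => (1 : ℝ))
    let Y : Matrix (Fin 1 ⊕ Fin r) (Fin 1 ⊕ Fin r) ℝ :=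
      1 - Matrix.vecMulVec (Sum.elim (0 : Fin 1 → ℝ) (1 : Fin r → ℝ))
        (Sum.elim (1 : Fin 1 → ℝ) (0 : Fin r → ℝ))
    let X : Matrix (Fin k ⊕ (Fin 1 ⊕ Fin r)) (Fin k ⊕ (Fin 1 ⊕ Fin r)) ℝ :=
      Matrix.fromBlocks 1 0 0 Y
    let H1 : Matrix (Fin k ⊕ Fin 1) (Fin k ⊕ Fin 1) ℝ :=
      Matrix.fromBlocks
        (ξ • (L11 * L11ᵀ + L12 * L12ᵀ) + c • Matrix.of (fun _ _ => (1 : ℝ)))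
        (Matrix.of (fun _ _ => c * (1 + r)))
        (Matrix.of (fun _ _ => c))
        (Matrix.of (fun _ _ => c * (1 + r)))
    let H2 : Matrix (Fin k ⊕ Fin 1) (Fin r) ℝ := Matrix.of (fun _ _ => c)
    X * (P * H * Pᵀ) * X⁻¹ =
      Matrix.reindex (Equiv.sumAssoc (Fin k) (Fin 1) (Fin r))
        (Equiv.sumAssoc (Fin k) (Fin 1) (Fin r))
        (Matrix.fromBlocks H1 H2 0 0) := by
  obtain ⟨σ, rfl⟩ := hP
  intro n c H Y X H1 H2
  have hPHP : σ.permMatrix ℝ * H * (σ.permMatrix ℝ)ᵀ =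
      ξ • fromBlocks (L11 * L11ᵀ + L12 * L12ᵀ) 0 0 0 + c • of fun _ _ => 1 := by
    simp only [H, Matrix.mul_add, Matrix.add_mul, Matrix.mul_smul, Matrix.smul_mul,
      conj_mul_transpose_self (permMatrix_transpose_mul_self σ), hL,
      fromBlocks_zero_mul_transpose, permMatrix_mul_ones_mul_transpose]
  have hXPHPX : X * (σ.permMatrix ℝ * H * (σ.permMatrix ℝ)ᵀ) * X⁻¹ =
      ξ • fromBlocks (L11 * L11ᵀ + L12 * L12ᵀ) 0 0 0 +
        c • vecMulVec (Sum.elim 1 (Sum.elim 1 0))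
          (Sum.elim 1 (Sum.elim (fun _ => 1 + (r : ℝ)) 1)) := by
    rw [show X = lumpingMatrix ℝ (Fin k) (Fin r) from rfl, hPHP, Matrix.mul_add,
      Matrix.add_mul, Matrix.mul_smul, Matrix.smul_mul, Matrix.mul_smul, Matrix.smul_mul,
      lumpingMatrix_conj_fromBlocks_zero, lumpingMatrix_conj_ones, Fintype.card_fin]
  rw [hXPHPX]
  ext (i | i | i) (j | j | j) <;> simp [H1, H2, vecMulVec_apply, mul_add]

/-- Theorem 3.1 (block form). With `m = 1 + r ≥ 1` dangling nodes,
`X = diag(I_k, Y)`, `Y = I_m − ê e₁ᵀ`, and `H` the hub matrix, if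
`P L Pᵀ = [[L₁₁, L₁₂], [0, 0]]` then
`X P H Pᵀ X⁻¹ = [[H⁽¹⁾, H⁽²⁾], [0, 0]]` where
`H⁽¹⁾ = [[ξ(L₁₁L₁₁ᵀ+L₁₂L₁₂ᵀ) + ((1−ξ)/n) eeᵀ, ((1−ξ)(n−k)/n) e], [((1−ξ)/n) eᵀ, (1−ξ)(n−k)/n]]`
and `H⁽²⁾ = [[((1−ξ)/n) eeᵀ], [((1−ξ)/n) eᵀ]]`, the bottom `m − 1` rows being zero. -/
theorem lumping_theorem_block_form (k r : ℕ)
    (ξ : ℝ) (hξ0 : 0 < ξ) (hξ1 : ξ < 1)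
    (L P : Matrix (Fin k ⊕ (Fin 1 ⊕ Fin r)) (Fin k ⊕ (Fin 1 ⊕ Fin r)) ℝ)
    (hP : ∃ σ : Equiv.Perm (Fin k ⊕ (Fin 1 ⊕ Fin r)), P = σ.permMatrix ℝ)
    (L11 : Matrix (Fin k) (Fin k) ℝ) (L12 : Matrix (Fin k) (Fin 1 ⊕ Fin r) ℝ)
    (hL : P * L * Pᵀ = Matrix.fromBlocks L11 L12 0 0) :
    let n : ℝ := (k : ℝ) + (1 + r)
    let c : ℝ := (1 - ξ) / n
    let H : Matrix (Fin k ⊕ (Fin 1 ⊕ Fin r)) (Fin k ⊕ (Fin 1 ⊕ Fin r)) ℝ :=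
      ξ • (L * Lᵀ) + c • Matrix.of (fun _ _ => (1 : ℝ))
    let Y : Matrix (Fin 1 ⊕ Fin r) (Fin 1 ⊕ Fin r) ℝ :=
      1 - Matrix.vecMulVec (Sum.elim (0 : Fin 1 → ℝ) (1 : Fin r → ℝ))
        (Sum.elim (1 : Fin 1 → ℝ) (0 : Fin r → ℝ))
    let X : Matrix (Fin k ⊕ (Fin 1 ⊕ Fin r)) (Fin k ⊕ (Fin 1 ⊕ Fin r)) ℝ :=
      Matrix.fromBlocks 1 0 0 Y
    let H1 : Matrix (Fin k ⊕ Fin 1) (Fin k ⊕ Fin 1) ℝ :=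
      Matrix.fromBlocks
        (ξ • (L11 * L11ᵀ + L12 * L12ᵀ) + c • Matrix.of (fun _ _ => (1 : ℝ)))
        (Matrix.of (fun _ _ => c * (1 + r)))
        (Matrix.of (fun _ _ => c))
        (Matrix.of (fun _ _ => c * (1 + r)))
    let H2 : Matrix (Fin k ⊕ Fin 1) (Fin r) ℝ := Matrix.of (fun _ _ => c)
    X * (P * H * Pᵀ) * X⁻¹ =
      Matrix.reindex (Equiv.sumAssoc (Fin k) (Fin 1) (Fin r))
        (Equiv.sumAssoc (Fin k) (Fin 1) (Fin r))
        (Matrix.fromBlocks H1 H2 0 0) :=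
  lumping_theorem_block_form_general k r ξ L P hP L11 L12 hL
end

section
/- Let σ ∈ ℝ^{k+1} satisfy σᵀ H⁽¹⁾ = λ σᵀ with σ ≥ 0 entrywise, ‖σ‖₁ = 1, and λ ≠ 0, and write σᵀ = [σ₁:ₖᵀ, σₖ₊₁]. Then the last entry is σₖ₊₁ = (1−ξ)(n−k)/(n λ). -/
/-!
Every entry of the last column of `H⁽¹⁾` equals `(1−ξ)(n−k)/n`, so the last entry of `σᵀ H⁽¹⁾`
is that constant times `∑ σᵢ = 1`; dividing `λ σₖ₊₁ = (1−ξ)(n−k)/n` by `λ` gives the claim.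
-/

open Matrix

namespace Matrix

variable {ι R : Type*} [Fintype ι]

theorem vecMul_apply_of_col_const [NonUnitalNonAssocSemiring R] {M : Matrix ι ι R} {j : ι}
    {b : R} (hM : ∀ i, M i j = b) (σ : ι → R) :
    vecMul σ M j = (∑ i, σ i) * b := by
  simp only [vecMul, dotProduct, hM, Finset.sum_mul]

theorem apply_eq_div_of_vecMul_eq_smul_of_col_const [Field R] {M : Matrix ι ι R} {j : ι}
    {b : R} (hM : ∀ i, M i j = b) {σ : ι → R} (hσ : ∑ i, σ i = 1) {lam : R} (hlam : lam ≠ 0)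
    (heig : vecMul σ M = lam • σ) :
    σ j = b / lam := by
  have hj : lam * σ j = b := by
    rw [← smul_eq_mul, ← Pi.smul_apply, ← heig, vecMul_apply_of_col_const hM, hσ, one_mul]
  rw [← hj, mul_div_cancel_left₀ _ hlam]

end Matrix

theorem last_entry_of_sigma_general (k m : ℕ)
    (ξ : ℝ)
    (L11 : Matrix (Fin k) (Fin k) ℝ) (L12 : Matrix (Fin k) (Fin m) ℝ)
    (lam : ℝ) (hlam : lam ≠ 0) (σ : Fin k ⊕ Fin 1 → ℝ)
    (hσnn : ∀ i, 0 ≤ σ i) (hσ1 : ∑ i, |σ i| = 1)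
    (heig : Matrix.vecMul σ
      (Matrix.fromBlocks
        (ξ • (L11 * L11ᵀ + L12 * L12ᵀ) +
          ((1 - ξ) / ((k : ℝ) + m)) • Matrix.of (fun _ _ => (1 : ℝ)))
        (Matrix.of (fun _ _ => ((1 - ξ) / ((k : ℝ) + m)) * m))
        (Matrix.of (fun _ _ => (1 - ξ) / ((k : ℝ) + m)))
        (Matrix.of (fun _ _ => ((1 - ξ) / ((k : ℝ) + m)) * m))) = lam • σ) :
    σ (Sum.inr 0) = (1 - ξ) * m / (((k : ℝ) + m) * lam) := by
  have hsum : ∑ i, σ i = 1 := by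
    simpa only [abs_of_nonneg (hσnn _)] using hσ1
  rw [apply_eq_div_of_vecMul_eq_smul_of_col_const (b := (1 - ξ) / ((k : ℝ) + m) * m)
    (fun i => by rcases i with i | i <;> rfl) hsum hlam heig]
  rw [div_mul_eq_mul_div, div_div]

/-- If `σᵀ H⁽¹⁾ = λ σᵀ` with `σ ≥ 0`, `‖σ‖₁ = 1` and `λ ≠ 0`, then the last entry of
`σ` equals `(1−ξ)(n−k)/(n λ)`. -/
theorem last_entry_of_sigma (k m : ℕ) (hm : 0 < m)
    (ξ : ℝ) (hξ0 : 0 < ξ) (hξ1 : ξ < 1)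
    (L11 : Matrix (Fin k) (Fin k) ℝ) (L12 : Matrix (Fin k) (Fin m) ℝ)
    (lam : ℝ) (hlam : lam ≠ 0) (σ : Fin k ⊕ Fin 1 → ℝ)
    (hσnn : ∀ i, 0 ≤ σ i) (hσ1 : ∑ i, |σ i| = 1)
    (heig : Matrix.vecMul σ
      (Matrix.fromBlocks
        (ξ • (L11 * L11ᵀ + L12 * L12ᵀ) +
          ((1 - ξ) / ((k : ℝ) + m)) • Matrix.of (fun _ _ => (1 : ℝ)))
        (Matrix.of (fun _ _ => ((1 - ξ) / ((k : ℝ) + m)) * m))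
        (Matrix.of (fun _ _ => (1 - ξ) / ((k : ℝ) + m)))
        (Matrix.of (fun _ _ => ((1 - ξ) / ((k : ℝ) + m)) * m))) = lam • σ) :
    σ (Sum.inr 0) = (1 - ξ) * m / (((k : ℝ) + m) * lam) :=
  last_entry_of_sigma_general k m ξ L11 L12 lam hlam σ hσnn hσ1 heig
end

section
/- (Theorem 3.2) Suppose P L Pᵀ = [[L₁₁, L₁₂], [0, 0]] and let σ ∈ ℝ^{k+1} satisfy σᵀ H⁽¹⁾ = λ σᵀ with σ ≥ 0 entrywise, ‖σ‖₁ = 1, and λ ≠ 0, where H⁽¹⁾ is the lumped hub matrix. Partition σᵀ = [σ₁:ₖᵀ, σₖ₊₁] and define π̃ᵀ = [σ₁:ₖᵀ, (1/λ) σᵀ [[((1−ξ)/n) e eᵀ], [((1−ξ)/n) eᵀ]]] P, where the inner block matrix lies in ℝ^{(k+1)×m} with e the all-ones vector of length k (resp. m for eᵀ). Then π̃ᵀ H = λ π̃ᵀ, i.e., π̃ is a left eigenvector of the hub matrix H for the eigenvalue λ. -/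
/-!
Conjugating by `P` turns `H` into `[[A, c e eᵀ], [c e eᵀ, c e eᵀ]]`, whose last `m` rows all
coincide; `H⁽¹⁾` is the matrix obtained by merging those `m` states into one. For such a
lumping, a left eigenvector `σ` of the lumped matrix lifts: keep `σ` on the unmerged states and
put `λ⁻¹ σᵀ K` on the merged ones, `K` being the columns of the merged states in the lumped
picture. Since the merged rows are equal, the unmerged coordinates only see the total mass of
this block, and the eigen-equation of the merged state says that this mass is `σₖ₊₁`.
-/

open Matrix

namespace Matrix

variable {n ι κ R : Type*}

section Permutation

variable [Fintype n] [DecidableEq n] [CommSemiring R]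

lemma transpose_permMatrix_mul_self (e : Equiv.Perm n) :
    (e.permMatrix R)ᵀ * e.permMatrix R = 1 := by
  rw [transpose_permMatrix, ← permMatrix_mul, mul_inv_cancel, permMatrix_one]

lemma permMatrix_mul_const_mul_transpose (e : Equiv.Perm n) (c : R) :
    e.permMatrix R * of (fun _ _ => c) * (e.permMatrix R)ᵀ = of (fun _ _ => c) := by
  rw [transpose_permMatrix, PEquiv.toMatrix_toPEquiv_mul, PEquiv.mul_toMatrix_toPEquiv]
  rfl

lemma mul_mul_transpose_of_transpose_mul_self {P : Matrix n n R} (hP : Pᵀ * P = 1)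
    (L : Matrix n n R) : P * (L * Lᵀ) * Pᵀ = (P * L * Pᵀ) * (P * L * Pᵀ)ᵀ := by
  simp only [transpose_mul, transpose_transpose, Matrix.mul_assoc]
  rw [← Matrix.mul_assoc Pᵀ P, hP, Matrix.one_mul]

lemma vecMul_vecMul_eq_smul_of_vecMul_conj_eq_smul {P H : Matrix n n R} (hP : Pᵀ * P = 1)
    {x : n → R} {lam : R} (hx : x ᵥ* (P * H * Pᵀ) = lam • x) :
    (x ᵥ* P) ᵥ* H = lam • (x ᵥ* P) := by
  rw [vecMul_vecMul, ← smul_vecMul, ← hx, vecMul_vecMul, Matrix.mul_assoc, hP, Matrix.mul_one]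

end Permutation

section Hub

variable [Fintype n] [CommSemiring R]

def hubMatrix (ξ c : R) (L : Matrix n n R) : Matrix n n R :=
  ξ • (L * Lᵀ) + c • of (fun _ _ => 1)

lemma permMatrix_mul_hubMatrix_mul_transpose [DecidableEq n] (e : Equiv.Perm n) (ξ c : R)
    (L : Matrix n n R) :
    e.permMatrix R * hubMatrix ξ c L * (e.permMatrix R)ᵀ =
      hubMatrix ξ c (e.permMatrix R * L * (e.permMatrix R)ᵀ) := by
  rw [hubMatrix, hubMatrix, Matrix.mul_add, Matrix.add_mul, Matrix.mul_smul, Matrix.smul_mul,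
    Matrix.mul_smul, Matrix.smul_mul,
    mul_mul_transpose_of_transpose_mul_self (transpose_permMatrix_mul_self e),
    permMatrix_mul_const_mul_transpose]

lemma hubMatrix_fromBlocks_zero_zero [Fintype ι] [Fintype κ] (ξ c : R) (L₁₁ : Matrix ι ι R)
    (L₁₂ : Matrix ι κ R) :
    hubMatrix ξ c (fromBlocks L₁₁ L₁₂ 0 0) =
      fromBlocks (ξ • (L₁₁ * L₁₁ᵀ + L₁₂ * L₁₂ᵀ) + c • of (fun _ _ => 1)) (of fun _ _ => c)
        (of fun _ _ => c) (of fun _ _ => c) := by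
  ext (i | i) (j | j) <;> simp [hubMatrix, fromBlocks_transpose, fromBlocks_multiply, mul_add]

end Hub

section Lumping

lemma vecMul_of_const_rows [Fintype κ] [NonUnitalNonAssocSemiring R] (x : κ → R) (u : ι → R) :
    x ᵥ* of (fun _ => u) = (∑ i, x i) • u := by
  ext j
  simp [vecMul, dotProduct, Finset.sum_mul]

variable [Fintype ι] [Fintype κ] [Field R]

/-- The matrix `[[A, B e], [uᵀ, vᵀ e]]` obtained from `fromBlocks A B (of fun _ => u)
(of fun _ => v)` by merging the states `κ`, whose rows all equal `[uᵀ, vᵀ]`, into one. -/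
def lumpedMatrix (A : Matrix ι ι R) (B : Matrix ι κ R) (u : ι → R) (v : κ → R) :
    Matrix (ι ⊕ Fin 1) (ι ⊕ Fin 1) R :=
  fromBlocks A (of fun i _ => (B *ᵥ 1) i) (of fun _ => u) (of fun _ _ => v ⬝ᵥ 1)

theorem vecMul_fromBlocks_const_rows_eq_smul_of_vecMul_lumpedMatrix
    {A : Matrix ι ι R} {B : Matrix ι κ R} {u : ι → R} {v : κ → R} {σ : ι ⊕ Fin 1 → R} {lam : R}
    (hlam : lam ≠ 0) (hσ : σ ᵥ* lumpedMatrix A B u v = lam • σ) :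
    let π := Sum.elim (σ ∘ Sum.inl) (lam⁻¹ • σ ᵥ* fromRows B (of fun _ => v))
    π ᵥ* fromBlocks A B (of fun _ => u) (of fun _ => v) = lam • π := by
  obtain ⟨x, y, rfl⟩ : ∃ x y, σ = Sum.elim x (fun _ => y) :=
    ⟨σ ∘ Sum.inl, σ (Sum.inr 0), funext fun
      | .inl _ => rfl
      | .inr j => by rw [Fin.fin_one_eq_zero j]; rfl⟩
  have hσ_apply := congrFun hσ
  simp only [lumpedMatrix, vecMul_fromBlocks, Sum.elim_comp_inl, Sum.elim_comp_inr,
    vecMul_of_const_rows, Fin.sum_univ_one, Sum.forall, Sum.elim_inl, Sum.elim_inr,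
    Pi.add_apply, Pi.smul_apply, smul_eq_mul] at hσ_apply
  obtain ⟨htop, hbot⟩ := hσ_apply
  have hw : Sum.elim x (fun _ : Fin 1 => y) ᵥ* fromRows B (of fun _ => v) = x ᵥ* B + y • v := by
    rw [sumElim_vecMul_fromRows, vecMul_of_const_rows, Fin.sum_univ_one]
  have hsum : (x ᵥ* B + y • v) ⬝ᵥ 1 = lam * y := by
    rw [add_dotProduct, ← dotProduct_mulVec, smul_dotProduct, ← hbot 0]
    simp [vecMul, dotProduct]
  have hmass : ∑ j, (lam⁻¹ • (x ᵥ* B + y • v)) j = y := by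
    simp only [Pi.smul_apply, smul_eq_mul, ← Finset.mul_sum]
    rw [← dotProduct_one, hsum, inv_mul_cancel_left₀ hlam]
  intro π
  simp only [π, hw, vecMul_fromBlocks, Sum.elim_comp_inl, Sum.elim_comp_inr,
    vecMul_of_const_rows, hmass]
  ext (i | j)
  · simp [htop]
  · simp [← mul_add, hlam]

end Lumping

end Matrix

theorem hub_vector_recovery_general (k m : ℕ)
    (ξ : ℝ)
    (L P : Matrix (Fin k ⊕ Fin m) (Fin k ⊕ Fin m) ℝ)
    (hP : ∃ σ : Equiv.Perm (Fin k ⊕ Fin m), P = σ.permMatrix ℝ)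
    (L11 : Matrix (Fin k) (Fin k) ℝ) (L12 : Matrix (Fin k) (Fin m) ℝ)
    (hL : P * L * Pᵀ = Matrix.fromBlocks L11 L12 0 0)
    (lam : ℝ) (hlam : lam ≠ 0) (σ : Fin k ⊕ Fin 1 → ℝ)
    (heig : Matrix.vecMul σ
      (Matrix.fromBlocks
        (ξ • (L11 * L11ᵀ + L12 * L12ᵀ) +
          ((1 - ξ) / ((k : ℝ) + m)) • Matrix.of (fun _ _ => (1 : ℝ)))
        (Matrix.of (fun _ _ => ((1 - ξ) / ((k : ℝ) + m)) * m))
        (Matrix.of (fun _ _ => (1 - ξ) / ((k : ℝ) + m)))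
        (Matrix.of (fun _ _ => ((1 - ξ) / ((k : ℝ) + m)) * m))) = lam • σ) :
    let c : ℝ := (1 - ξ) / ((k : ℝ) + m)
    let H : Matrix (Fin k ⊕ Fin m) (Fin k ⊕ Fin m) ℝ :=
      ξ • (L * Lᵀ) + c • Matrix.of (fun _ _ => (1 : ℝ))
    let K : Matrix (Fin k ⊕ Fin 1) (Fin m) ℝ := Matrix.of (fun _ _ => c)
    let πt : Fin k ⊕ Fin m → ℝ :=
      Matrix.vecMul (Sum.elim (fun i => σ (Sum.inl i)) ((1 / lam) • Matrix.vecMul σ K)) P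
    Matrix.vecMul πt H = lam • πt := by
  obtain ⟨e, rfl⟩ := hP
  intro c H K πt
  have hconj : e.permMatrix ℝ * hubMatrix ξ c L * (e.permMatrix ℝ)ᵀ =
      fromBlocks (ξ • (L11 * L11ᵀ + L12 * L12ᵀ) + c • of (fun _ _ => 1)) (of fun _ _ => c)
        (of fun _ _ => c) (of fun _ _ => c) := by
    rw [permMatrix_mul_hubMatrix_mul_transpose, hL, hubMatrix_fromBlocks_zero_zero]
  have hlumped : lumpedMatrix (ξ • (L11 * L11ᵀ + L12 * L12ᵀ) + c • of (fun _ _ => 1))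
      (of fun _ _ => c : Matrix (Fin k) (Fin m) ℝ) (fun _ => c) (fun _ => c) =
      fromBlocks (ξ • (L11 * L11ᵀ + L12 * L12ᵀ) + c • of (fun _ _ => 1)) (of fun _ _ => c * m)
        (of fun _ _ => c) (of fun _ _ => c * m) := by
    ext (i | i) (j | j) <;> simp [lumpedMatrix, mulVec, dotProduct, mul_comm]
  have hK : fromRows (of fun _ _ => c) (of fun _ _ => c) = K := by
    ext (i | i) j <;> rfl
  have hlift := vecMul_fromBlocks_const_rows_eq_smul_of_vecMul_lumpedMatrix hlam
    (hlumped ▸ heig)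
  rw [← hconj, hK, ← one_div] at hlift
  exact vecMul_vecMul_eq_smul_of_vecMul_conj_eq_smul (transpose_permMatrix_mul_self e) hlift

/-- Theorem 3.2: if `σᵀ H⁽¹⁾ = λ σᵀ` with `σ ≥ 0`, `‖σ‖₁ = 1`, `λ ≠ 0`, then
`π̃ᵀ = [σ₁:ₖᵀ, (1/λ) σᵀ [[((1−ξ)/n) eeᵀ], [((1−ξ)/n) eᵀ]]] P` is a left
eigenvector of the hub matrix `H` for the eigenvalue `λ`. -/
theorem hub_vector_recovery (k m : ℕ) (hm : 0 < m)
    (ξ : ℝ) (hξ0 : 0 < ξ) (hξ1 : ξ < 1)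
    (L P : Matrix (Fin k ⊕ Fin m) (Fin k ⊕ Fin m) ℝ)
    (hP : ∃ σ : Equiv.Perm (Fin k ⊕ Fin m), P = σ.permMatrix ℝ)
    (L11 : Matrix (Fin k) (Fin k) ℝ) (L12 : Matrix (Fin k) (Fin m) ℝ)
    (hL : P * L * Pᵀ = Matrix.fromBlocks L11 L12 0 0)
    (lam : ℝ) (hlam : lam ≠ 0) (σ : Fin k ⊕ Fin 1 → ℝ)
    (hσnn : ∀ i, 0 ≤ σ i) (hσ1 : ∑ i, |σ i| = 1)
    (heig : Matrix.vecMul σ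
      (Matrix.fromBlocks
        (ξ • (L11 * L11ᵀ + L12 * L12ᵀ) +
          ((1 - ξ) / ((k : ℝ) + m)) • Matrix.of (fun _ _ => (1 : ℝ)))
        (Matrix.of (fun _ _ => ((1 - ξ) / ((k : ℝ) + m)) * m))
        (Matrix.of (fun _ _ => (1 - ξ) / ((k : ℝ) + m)))
        (Matrix.of (fun _ _ => ((1 - ξ) / ((k : ℝ) + m)) * m))) = lam • σ) :
    let c : ℝ := (1 - ξ) / ((k : ℝ) + m)
    let H : Matrix (Fin k ⊕ Fin m) (Fin k ⊕ Fin m) ℝ :=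
      ξ • (L * Lᵀ) + c • Matrix.of (fun _ _ => (1 : ℝ))
    let K : Matrix (Fin k ⊕ Fin 1) (Fin m) ℝ := Matrix.of (fun _ _ => c)
    let πt : Fin k ⊕ Fin m → ℝ :=
      Matrix.vecMul (Sum.elim (fun i => σ (Sum.inl i)) ((1 / lam) • Matrix.vecMul σ K)) P
    Matrix.vecMul πt H = lam • πt :=
  hub_vector_recovery_general k m ξ L P hP L11 L12 hL lam hlam σ heig
end

section
/- With the hypotheses and notation of Theorem 3.2, the recovered vector π̃ᵀ = [σ₁:ₖᵀ, (1/λ) σᵀ [[((1−ξ)/n) e eᵀ], [((1−ξ)/n) eᵀ]]] P is entrywise nonnegative and satisfies the normalization eᵀ π̃ = 1. -/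
/-!
The last column of the lumped hub matrix is constant, equal to `c m` with `c = (1 - ξ)/n`, so the
last entry of the eigen-equation reads `λ σₖ₊₁ = c m (eᵀσ) = c m`. Hence `λ > 0`, the recovered
tail `(1/λ) σᵀ K = (c/λ) eᵀ` is nonnegative, and its `m` entries add up to `c m / λ = σₖ₊₁`.
So before the permutation the recovered vector sums to `eᵀσ = 1`, and `P` only reorders entries.
-/

open Matrix

namespace Matrix

variable {l m n o α : Type*} [Fintype n] [Fintype o]

lemma vecMul_of_const [NonUnitalNonAssocSemiring α] (x : n → α) (b : α) (j : m) :
    (x ᵥ* of fun _ _ => b) j = (∑ i, x i) * b := by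
  simp only [vecMul, dotProduct, of_apply, Finset.sum_mul]

lemma vecMul_fromBlocks_inr_of_const [NonUnitalNonAssocSemiring α] (A : Matrix n l α)
    (C : Matrix o l α) (b : α) (x : n ⊕ o → α) (j : m) :
    (x ᵥ* fromBlocks A (of fun _ _ => b) C (of fun _ _ => b)) (Sum.inr j) = (∑ i, x i) * b := by
  simp only [vecMul_fromBlocks, Sum.elim_inr, Pi.add_apply, vecMul_of_const,
    Fintype.sum_sum_type, Function.comp_apply, add_mul]

lemma sum_vecMul_permMatrix [DecidableEq n] [CommRing α] (e : Equiv.Perm n) (x : n → α) :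
    ∑ i, (x ᵥ* e.permMatrix α) i = ∑ i, x i := by
  rw [vecMul_permMatrix]
  exact e.symm.sum_comp x

end Matrix

theorem hub_vector_nonneg_normalized_general (k m : ℕ) (hm : 0 < m)
    (ξ : ℝ) (hξ1 : ξ < 1)
    (P : Matrix (Fin k ⊕ Fin m) (Fin k ⊕ Fin m) ℝ)
    (hP : ∃ σ : Equiv.Perm (Fin k ⊕ Fin m), P = σ.permMatrix ℝ)
    (L11 : Matrix (Fin k) (Fin k) ℝ) (L12 : Matrix (Fin k) (Fin m) ℝ)
    (lam : ℝ) (hlam : lam ≠ 0) (σ : Fin k ⊕ Fin 1 → ℝ)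
    (hσnn : ∀ i, 0 ≤ σ i) (hσ1 : ∑ i, |σ i| = 1)
    (heig : Matrix.vecMul σ
      (Matrix.fromBlocks
        (ξ • (L11 * L11ᵀ + L12 * L12ᵀ) +
          ((1 - ξ) / ((k : ℝ) + m)) • Matrix.of (fun _ _ => (1 : ℝ)))
        (Matrix.of (fun _ _ => ((1 - ξ) / ((k : ℝ) + m)) * m))
        (Matrix.of (fun _ _ => (1 - ξ) / ((k : ℝ) + m)))
        (Matrix.of (fun _ _ => ((1 - ξ) / ((k : ℝ) + m)) * m))) = lam • σ) :
    let c : ℝ := (1 - ξ) / ((k : ℝ) + m)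
    let K : Matrix (Fin k ⊕ Fin 1) (Fin m) ℝ := Matrix.of (fun _ _ => c)
    let πt : Fin k ⊕ Fin m → ℝ :=
      Matrix.vecMul (Sum.elim (fun i => σ (Sum.inl i)) ((1 / lam) • Matrix.vecMul σ K)) P
    (∀ i, 0 ≤ πt i) ∧ ∑ i, πt i = 1 := by
  intro c K πt
  obtain ⟨e, rfl⟩ := hP
  have hc : 0 < c := div_pos (by linarith) (by positivity)
  have hsum : ∑ i, σ i = 1 := by simpa only [abs_of_nonneg (hσnn _)] using hσ1
  have hlast : lam * σ (Sum.inr 0) = c * m := by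
    simpa [vecMul_fromBlocks_inr_of_const, hsum] using (congrFun heig (Sum.inr 0)).symm
  have hlam_pos : 0 < lam := by
    refine lt_of_le_of_ne (not_lt.mp fun hneg => ?_) hlam.symm
    nlinarith [hσnn (Sum.inr 0), mul_pos hc (Nat.cast_pos.mpr hm : (0 : ℝ) < m)]
  have htail (j : Fin m) : ((1 / lam) • σ ᵥ* K) j = c / lam := by
    simp [K, vecMul_of_const, hsum, div_eq_inv_mul]
  have htail_sum : ∑ j : Fin m, c / lam = σ (Sum.inr 0) := by
    rw [Finset.sum_const, Finset.card_univ, Fintype.card_fin, nsmul_eq_mul]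
    field_simp
    linarith
  refine ⟨fun i => ?_, ?_⟩
  · simp only [πt, vecMul_permMatrix, Function.comp_apply]
    rcases e.symm i with j | j
    · exact hσnn _
    · rw [Sum.elim_inr, htail]; positivity
  · simp only [πt, sum_vecMul_permMatrix, Fintype.sum_sum_type, Sum.elim_inl, Sum.elim_inr,
      htail, htail_sum]
    simpa [Fintype.sum_sum_type] using hsum

/-- With the hypotheses of Theorem 3.2, the recovered vector
`π̃ᵀ = [σ₁:ₖᵀ, (1/λ) σᵀ [[((1−ξ)/n) eeᵀ], [((1−ξ)/n) eᵀ]]] P` is entrywise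
nonnegative and satisfies `eᵀ π̃ = 1`. -/
theorem hub_vector_nonneg_normalized (k m : ℕ) (hm : 0 < m)
    (ξ : ℝ) (hξ0 : 0 < ξ) (hξ1 : ξ < 1)
    (L P : Matrix (Fin k ⊕ Fin m) (Fin k ⊕ Fin m) ℝ)
    (hP : ∃ σ : Equiv.Perm (Fin k ⊕ Fin m), P = σ.permMatrix ℝ)
    (L11 : Matrix (Fin k) (Fin k) ℝ) (L12 : Matrix (Fin k) (Fin m) ℝ)
    (hL : P * L * Pᵀ = Matrix.fromBlocks L11 L12 0 0)
    (lam : ℝ) (hlam : lam ≠ 0) (σ : Fin k ⊕ Fin 1 → ℝ)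
    (hσnn : ∀ i, 0 ≤ σ i) (hσ1 : ∑ i, |σ i| = 1)
    (heig : Matrix.vecMul σ
      (Matrix.fromBlocks
        (ξ • (L11 * L11ᵀ + L12 * L12ᵀ) +
          ((1 - ξ) / ((k : ℝ) + m)) • Matrix.of (fun _ _ => (1 : ℝ)))
        (Matrix.of (fun _ _ => ((1 - ξ) / ((k : ℝ) + m)) * m))
        (Matrix.of (fun _ _ => (1 - ξ) / ((k : ℝ) + m)))
        (Matrix.of (fun _ _ => ((1 - ξ) / ((k : ℝ) + m)) * m))) = lam • σ) :
    let c : ℝ := (1 - ξ) / ((k : ℝ) + m)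
    let K : Matrix (Fin k ⊕ Fin 1) (Fin m) ℝ := Matrix.of (fun _ _ => c)
    let πt : Fin k ⊕ Fin m → ℝ :=
      Matrix.vecMul (Sum.elim (fun i => σ (Sum.inl i)) ((1 / lam) • Matrix.vecMul σ K)) P
    (∀ i, 0 ≤ πt i) ∧ ∑ i, πt i = 1 :=
  hub_vector_nonneg_normalized_general k m hm ξ hξ1 P hP L11 L12 lam hlam σ hσnn hσ1 heig
end
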